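/- arXiv:2312.10377 — 6 statements merged into one kernel-verified Lean document; each statement's English description precedes it below -/
import Mathlib

section
/- For any positive integers m, n, k with k ≥ 2, the graph S_1(n,k) is isomorphic to a subgraph of S_m(n,(k-1)m+1), via the map sending a word x_1x_2...x_n to (m·x_1)(m·x_2)...(m·x_n); that is, this map is an injective graph homomorphism whose image is an induced subgraph. -/
/-- `A^n_m(k)`: words of length `n` over `{0,...,k-1}` with consecutive letters differing by at least `m`. -/
def AWord (m n k : ℕ) (x : List ℕ) : Prop :=
  x.length = n ∧ (∀ a ∈ x, a < k) ∧
    ∀ i, i + 1 < n → m ≤ Nat.dist (x.getD i 0) (x.getD (i+1) 0)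

/-- de Bruijn-style adjacency: the suffix of one word equals the prefix of the other. -/
def dbAdj (u v : List ℕ) : Prop := u.tail = v.dropLast ∨ v.tail = u.dropLast

/-- The simplified de Bruijn-type graph `S_m(n,k)`. -/
def S (m n k : ℕ) : SimpleGraph {x : List ℕ // AWord m n k x} where
  Adj u v := u ≠ v ∧ dbAdj u.1 v.1
  symm := ⟨fun u v h => ⟨h.1.symm, Or.symm h.2⟩⟩
  loopless := ⟨fun u h => h.1 rfl⟩

lemma List.getD_map_mul (c : ℕ) (x : List ℕ) (i : ℕ) :
    (x.map (c * ·)).getD i 0 = c * x.getD i 0 := by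
  simp only [List.getD_eq_getElem?_getD, List.getElem?_map]
  cases x[i]? <;> simp

lemma AWord.map_mul {m n k : ℕ} {x : List ℕ} (hx : AWord m n k x) (c : ℕ) :
    AWord (c * m) n ((k - 1) * c + 1) (x.map (c * ·)) := by
  obtain ⟨hlen, hlt, hdist⟩ := hx
  refine ⟨by simpa using hlen, ?_, fun i hi => ?_⟩
  · simp only [List.mem_map, forall_exists_index, and_imp, forall_apply_eq_imp_iff₂]
    intro a ha
    have : c * a ≤ (k - 1) * c := by
      rw [mul_comm]; exact Nat.mul_le_mul_right c (Nat.le_sub_one_of_lt (hlt a ha))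
    omega
  · rw [List.getD_map_mul, List.getD_map_mul, Nat.dist_mul_left]
    exact Nat.mul_le_mul_left c (hdist i hi)

lemma dbAdj_map_iff {f : ℕ → ℕ} (hf : Function.Injective f) {u v : List ℕ} :
    dbAdj (u.map f) (v.map f) ↔ dbAdj u v := by
  simp only [dbAdj, ← List.map_tail, ← List.map_dropLast, (List.map_injective_iff.2 hf).eq_iff]

def S.embeddingOfMap {m n k m' k' : ℕ} (f : ℕ → ℕ) (hf : Function.Injective f)
    (hA : ∀ x, AWord m n k x → AWord m' n k' (x.map f)) : S m n k ↪g S m' n k' where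
  toFun u := ⟨u.1.map f, hA u.1 u.2⟩
  inj' u v h := Subtype.ext <| List.map_injective_iff.2 hf (congrArg Subtype.val h)
  map_rel_iff' {u v} := by
    change (S m' n k').Adj ⟨u.1.map f, hA u.1 u.2⟩ ⟨v.1.map f, hA v.1 v.2⟩ ↔ (S m n k).Adj u v
    simp only [S, ne_eq, Subtype.ext_iff, (List.map_injective_iff.2 hf).eq_iff,
      dbAdj_map_iff hf]

theorem stmt1_general (m n k : ℕ) (hm : 0 < m) :
    ∃ f : S 1 n k ↪g S m n ((k-1)*m+1),
      ∀ u : {x : List ℕ // AWord 1 n k x}, (f u).1 = u.1.map (fun a => m * a) :=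
  ⟨S.embeddingOfMap (m * ·) (mul_right_injective₀ hm.ne')
    fun x hx => by simpa using hx.map_mul m, fun _ => rfl⟩

theorem stmt1 (m n k : ℕ) (hm : 0 < m) (hn : 0 < n) (hk : 2 ≤ k) :
    ∃ f : S 1 n k ↪g S m n ((k-1)*m+1),
      ∀ u : {x : List ℕ // AWord 1 n k x}, (f u).1 = u.1.map (fun a => m * a) :=
  stmt1_general m n k hm
end

section
/- For every n ≥ 2 and every m ≥ 1, the graph S^<_m(n,k) induced by the increasing words A^n_m(k,<) is triangle-free, for every k. -/
/-!
Orient every edge of `S^<_m(n,k)` from `u` to `v` when the suffix of `u` is the prefix of `v`.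
Then the first letter of `v` is the second letter of `u`, which exceeds the first letter of `u`
by at least `m ≥ 1`; so first letters strictly increase along arcs, and adjacent words have
distinct first letters. In a triangle, the word `a` with the smallest first letter has arcs to
both other words `b` and `c`, whence `b` and `c` both start with the second letter of `a`,
although they are adjacent.
-/

/-- `A^n_m(k,<)`: m-increasing words of length `n` over `{0,...,k-1}`. -/
def AWordLt (m n k : ℕ) (x : List ℕ) : Prop :=
  x.length = n ∧ (∀ a ∈ x, a < k) ∧
    ∀ i, i + 1 < n → x.getD i 0 + m ≤ x.getD (i+1) 0

/-- The graph `S^<_m(n,k)` on m-increasing words. -/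
def Slt (m n k : ℕ) : SimpleGraph {x : List ℕ // AWordLt m n k x} where
  Adj u v := u ≠ v ∧ dbAdj u.1 v.1
  symm := by constructor; intro u v h; exact ⟨h.1.symm, Or.symm h.2⟩
  loopless := by constructor; intro u h; exact h.1 rfl

theorem List.getD_zero_eq_getD_one_of_tail_eq_dropLast {α : Type*} {u v : List α} (d : α)
    (h : u.tail = v.dropLast) (hu : 2 ≤ u.length) : v.getD 0 d = u.getD 1 d := by
  match u, v with
  | _ :: b :: _, _ :: _ :: _ => simp_all
  | _ :: _ :: _, [] | _ :: _ :: _, [_] => simp at h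
  | [], _ | [_], _ => simp at hu

section

variable {m n k : ℕ} {u v : List ℕ}

theorem AWordLt.getD_zero_add_le (hu : AWordLt m n k u) (hn : 2 ≤ n) :
    u.getD 0 0 + m ≤ u.getD 1 0 :=
  hu.2.2 0 (by omega)

theorem AWordLt.getD_zero_eq_of_tail_eq_dropLast (hu : AWordLt m n k u) (hn : 2 ≤ n)
    (h : u.tail = v.dropLast) : v.getD 0 0 = u.getD 1 0 :=
  List.getD_zero_eq_getD_one_of_tail_eq_dropLast 0 h (hu.1 ▸ hn)

theorem AWordLt.getD_zero_lt_of_tail_eq_dropLast (hu : AWordLt m n k u) (hm : 1 ≤ m)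
    (hn : 2 ≤ n) (h : u.tail = v.dropLast) : u.getD 0 0 < v.getD 0 0 := by
  rw [hu.getD_zero_eq_of_tail_eq_dropLast hn h]
  have := hu.getD_zero_add_le hn
  omega

end

namespace Slt

variable {m n k : ℕ} {u v : {x : List ℕ // AWordLt m n k x}}

theorem getD_zero_ne_of_adj (hm : 1 ≤ m) (hn : 2 ≤ n) (huv : (Slt m n k).Adj u v) :
    u.1.getD 0 0 ≠ v.1.getD 0 0 := by
  rcases huv.2 with h | h
  · exact (u.2.getD_zero_lt_of_tail_eq_dropLast hm hn h).ne
  · exact (v.2.getD_zero_lt_of_tail_eq_dropLast hm hn h).ne'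

theorem getD_zero_eq_of_adj_of_le (hm : 1 ≤ m) (hn : 2 ≤ n) (huv : (Slt m n k).Adj u v)
    (hle : u.1.getD 0 0 ≤ v.1.getD 0 0) : v.1.getD 0 0 = u.1.getD 1 0 := by
  rcases huv.2 with h | h
  · exact u.2.getD_zero_eq_of_tail_eq_dropLast hn h
  · exact absurd (v.2.getD_zero_lt_of_tail_eq_dropLast hm hn h) hle.not_gt

end Slt

theorem stmt9 (m n k : ℕ) (hm : 1 ≤ m) (hn : 2 ≤ n) :
    (Slt m n k).CliqueFree 3 := by
  intro s hs
  obtain ⟨a, has, hmin⟩ := s.exists_min_image (fun x => x.1.getD 0 0)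
    (Finset.card_pos.mp (by rw [hs.card_eq]; norm_num))
  obtain ⟨b, c, hbc, hbc_eq⟩ := Finset.card_eq_two.mp
    (by rw [Finset.card_erase_of_mem has, hs.card_eq] : (s.erase a).card = 2)
  have hb : b ∈ s.erase a := by simp [hbc_eq]
  have hc : c ∈ s.erase a := by simp [hbc_eq]
  have hab := hs.1 has (Finset.mem_of_mem_erase hb) (Finset.ne_of_mem_erase hb).symm
  have hac := hs.1 has (Finset.mem_of_mem_erase hc) (Finset.ne_of_mem_erase hc).symm
  have hb_eq := Slt.getD_zero_eq_of_adj_of_le hm hn hab (hmin b (Finset.mem_of_mem_erase hb))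
  have hc_eq := Slt.getD_zero_eq_of_adj_of_le hm hn hac (hmin c (Finset.mem_of_mem_erase hc))
  exact Slt.getD_zero_ne_of_adj hm hn (hs.1 (Finset.mem_of_mem_erase hb)
    (Finset.mem_of_mem_erase hc) hbc) (hb_eq.trans hc_eq.symm)
end

section
/- For every m ≥ 1, the graph S^<_m(2,4m) induced by increasing two-letter words over the alphabet {0,...,4m-1} is bipartite (contains no odd cycle). -/
open SimpleGraph

def pairSide (m a b : ℕ) : Bool :=
  decide (b < 2 * m ∨ 2 * m ≤ a ∧ 3 * m ≤ b)

lemma pairSide_ne {m a b d : ℕ} (hab : a + m ≤ b) (hbd : b + m ≤ d) (hd : d < 4 * m) :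
    pairSide m a b ≠ pairSide m b d := by
  simp only [pairSide, ne_eq, decide_eq_decide]
  omega

lemma awordLt_two_iff {m k : ℕ} {x : List ℕ} :
    AWordLt m 2 k x ↔ ∃ a b, x = [a, b] ∧ a + m ≤ b ∧ b < k := by
  constructor
  · rintro ⟨hlen, hlt, hinc⟩
    obtain ⟨a, b, rfl⟩ := List.length_eq_two.mp hlen
    exact ⟨a, b, rfl, by simpa using hinc 0 one_lt_two, hlt b (by simp)⟩
  · rintro ⟨a, b, rfl, hab, hb⟩
    refine ⟨rfl, by simpa using ⟨by omega, hb⟩, fun i hi => ?_⟩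
    obtain rfl : i = 0 := by omega
    simpa using hab

lemma dbAdj_pair {a b c d : ℕ} : dbAdj [a, b] [c, d] ↔ b = c ∨ d = a := by
  simp [dbAdj]

theorem Slt_two_colorable {m k : ℕ} (hk : k ≤ 4 * m) : (Slt m 2 k).Colorable 2 := by
  let C : (Slt m 2 k).Coloring Bool :=
    Coloring.mk (fun u => pairSide m (u.1.getD 0 0) (u.1.getD 1 0)) <| by
      rintro ⟨u, hu⟩ ⟨v, hv⟩ ⟨-, huv⟩
      obtain ⟨a, b, rfl, hab, hb⟩ := awordLt_two_iff.mp hu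
      obtain ⟨c, d, rfl, hcd, hd⟩ := awordLt_two_iff.mp hv
      rcases dbAdj_pair.mp huv with rfl | rfl
      · exact pairSide_ne hab hcd (hd.trans_le hk)
      · exact (pairSide_ne hcd hab (hb.trans_le hk)).symm
  simpa using C.colorable

theorem stmt10_general (m : ℕ) : (Slt m 2 (4*m)).Colorable 2 :=
  Slt_two_colorable le_rfl

theorem stmt10 (m : ℕ) (hm : 1 ≤ m) : (Slt m 2 (4*m)).Colorable 2 :=
  stmt10_general m
end

section
/- For every m ≥ 1, in the set A^3_m(4m,<) of m-increasing 3-letter words over {0,...,4m-1}, the three sets A = {x_1x_2x_3 : x_1 ≤ m-1, x_3 ≥ 3m}, B = {x_1x_2x_3 : m ≤ x_1 ≤ 2m-1, x_3 ≥ 3m}, and C = {x_1x_2x_3 : x_1 ≤ m-1, 2m ≤ x_3 ≤ 3m-1} form a partition of A^3_m(4m,<); every vertex of A is isolated in S^<_m(3,4m), and every edge of S^<_m(3,4m) joins a vertex of B to a vertex of C. -/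
/-! If both `abc` and `bcf` are words, then `c ≥ a + 2m` and `c + m ≤ f < 4m` give
`2m ≤ c < 3m`, and likewise `m ≤ b < 2m` and `f ≥ 3m`; so `abc ∈ C` and `bcf ∈ B`, and since
`A` is disjoint from `B` and `C`, its words have no neighbours. The partition is a case split on
the first and last letters, again using `c ≥ a + 2m` (and `m ≥ 1`). -/

lemma AWordLt.exists_eq_triple {m k : ℕ} {x : List ℕ} (h : AWordLt m 3 k x) :
    ∃ a b c, x = [a, b, c] ∧ a + m ≤ b ∧ b + m ≤ c ∧ c < k := by
  obtain ⟨hlen, hlt, hinc⟩ := h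
  match x, hlen with
  | [a, b, c], _ => exact ⟨a, b, c, rfl, hinc 0 (by omega), hinc 1 (by omega), hlt c (by simp)⟩

lemma dbAdj_triple_iff {a b c d e f : ℕ} :
    dbAdj [a, b, c] [d, e, f] ↔ (b = d ∧ c = e) ∨ (e = a ∧ f = b) := by
  simp [dbAdj]

theorem stmt14 (m : ℕ) (hm : 1 ≤ m) :
    let PA : {x : List ℕ // AWordLt m 3 (4*m) x} → Prop :=
      fun v => v.1.getD 0 0 < m ∧ 3*m ≤ v.1.getD 2 0
    let PB : {x : List ℕ // AWordLt m 3 (4*m) x} → Prop :=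
      fun v => m ≤ v.1.getD 0 0 ∧ v.1.getD 0 0 < 2*m ∧ 3*m ≤ v.1.getD 2 0
    let PC : {x : List ℕ // AWordLt m 3 (4*m) x} → Prop :=
      fun v => v.1.getD 0 0 < m ∧ 2*m ≤ v.1.getD 2 0 ∧ v.1.getD 2 0 < 3*m
    (∀ v, (PA v ∧ ¬ PB v ∧ ¬ PC v) ∨ (¬ PA v ∧ PB v ∧ ¬ PC v) ∨ (¬ PA v ∧ ¬ PB v ∧ PC v)) ∧
    (∀ v, PA v → ∀ u, ¬ (Slt m 3 (4*m)).Adj v u) ∧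
    (∀ u v, (Slt m 3 (4*m)).Adj u v → (PB u ∧ PC v) ∨ (PC u ∧ PB v)) := by
  intro PA PB PC
  refine ⟨fun v => ?_, fun v hA u huv => ?_, fun u v huv => ?_⟩
  · obtain ⟨a, b, c, hv, hab, hbc, hc⟩ := v.2.exists_eq_triple
    simp only [PA, PB, PC, hv, List.getD_cons_zero, List.getD_cons_succ]
    omega
  · obtain ⟨a, b, c, hv, hab, hbc, hc⟩ := v.2.exists_eq_triple
    obtain ⟨d, e, f, hu, hde, hef, hf⟩ := u.2.exists_eq_triple
    have hadj := huv.2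
    rw [hv, hu, dbAdj_triple_iff] at hadj
    simp only [PA, hv, List.getD_cons_zero, List.getD_cons_succ] at hA
    omega
  · obtain ⟨a, b, c, hu, hab, hbc, hc⟩ := u.2.exists_eq_triple
    obtain ⟨d, e, f, hv, hde, hef, hf⟩ := v.2.exists_eq_triple
    have hadj := huv.2
    rw [hu, hv, dbAdj_triple_iff] at hadj
    simp only [PB, PC, hu, hv, List.getD_cons_zero, List.getD_cons_succ]
    omega
end

section
/- For every m ≥ 1, in the set A^4_m(5m,<) of m-increasing 4-letter words over {0,...,5m-1}, the three sets A = {x : x_1 ≤ m-1 and x_4 ≥ 4m}, B = {x : m ≤ x_1 ≤ 2m-1 and x_4 ≥ 4m}, and C = {x : x_1 ≤ m-1 and 3m ≤ x_4 ≤ 4m-1} partition A^4_m(5m,<); every vertex of A is isolated in S^<_m(4,5m), and every edge of S^<_m(4,5m) joins B to C. In particular S^<_m(4,5m) is bipartite with parts A ∪ B and C. -/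
/-!
An edge of `S^<_m(4,5m)` glues its two ends into an `m`-increasing word `x₁x₂x₃x₄x₅` below `5m`.
Then `x₁ + 4m ≤ x₅ < 5m` forces `x₁ < m`, and likewise `m ≤ x₂ < 2m`, `3m ≤ x₄ < 4m` and
`4m ≤ x₅`: the end `x₁x₂x₃x₄` lies in `C` and the end `x₂x₃x₄x₅` in `B`. Since the three classes are
separated by the first and last letters, `A` meets no edge.
-/

theorem AWordLt.eq_quad {m k : ℕ} {x : List ℕ} (h : AWordLt m 4 k x) :
    ∃ a b c d, x = [a, b, c, d] ∧ d < k ∧ a + m ≤ b ∧ b + m ≤ c ∧ c + m ≤ d := by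
  obtain ⟨hlen, hlt, hinc⟩ := h
  match x, hlen with
  | [a, b, c, d], _ =>
    exact ⟨a, b, c, d, rfl, hlt d (by simp), hinc 0 (by norm_num), hinc 1 (by norm_num),
      hinc 2 (by norm_num)⟩

theorem dbAdj_quad_iff {a b c d a' b' c' d' : ℕ} :
    dbAdj [a, b, c, d] [a', b', c', d'] ↔
      (a' = b ∧ b' = c ∧ c' = d) ∨ (a = b' ∧ b = c' ∧ c = d') := by
  simp only [dbAdj, List.tail, List.dropLast, List.cons.injEq, and_true]
  constructor <;> rintro (⟨h₁, h₂, h₃⟩ | ⟨h₁, h₂, h₃⟩) <;> simp_all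

theorem Slt.exists_quint_of_adj {m k : ℕ} {u v : {x : List ℕ // AWordLt m 4 k x}}
    (huv : (Slt m 4 k).Adj u v) :
    ∃ a b c d e, (u.1 = [a, b, c, d] ∧ v.1 = [b, c, d, e] ∨ u.1 = [b, c, d, e] ∧ v.1 = [a, b, c, d]) ∧
      e < k ∧ a + m ≤ b ∧ b + m ≤ c ∧ c + m ≤ d ∧ d + m ≤ e := by
  obtain ⟨a, b, c, d, hu, hd, hab, hbc, hcd⟩ := u.2.eq_quad
  obtain ⟨a', b', c', d', hv, hd', hab', hbc', hcd'⟩ := v.2.eq_quad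
  have hdb := huv.2
  rw [hu, hv, dbAdj_quad_iff] at hdb
  rcases hdb with ⟨rfl, rfl, rfl⟩ | ⟨rfl, rfl, rfl⟩
  · exact ⟨a, a', b', c', d', Or.inl ⟨hu, hv⟩, hd', hab, hab', hbc', hcd'⟩
  · exact ⟨a', a, b, c, d, Or.inr ⟨hu, hv⟩, hd, hab', hab, hbc, hcd⟩

theorem stmt15_general (m : ℕ) :
    let PA : {x : List ℕ // AWordLt m 4 (5*m) x} → Prop :=
      fun v => v.1.getD 0 0 < m ∧ 4*m ≤ v.1.getD 3 0
    let PB : {x : List ℕ // AWordLt m 4 (5*m) x} → Prop :=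
      fun v => m ≤ v.1.getD 0 0 ∧ v.1.getD 0 0 < 2*m ∧ 4*m ≤ v.1.getD 3 0
    let PC : {x : List ℕ // AWordLt m 4 (5*m) x} → Prop :=
      fun v => v.1.getD 0 0 < m ∧ 3*m ≤ v.1.getD 3 0 ∧ v.1.getD 3 0 < 4*m
    (∀ v, (PA v ∧ ¬ PB v ∧ ¬ PC v) ∨ (¬ PA v ∧ PB v ∧ ¬ PC v) ∨ (¬ PA v ∧ ¬ PB v ∧ PC v)) ∧
    (∀ v, PA v → ∀ u, ¬ (Slt m 4 (5*m)).Adj v u) ∧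
    (∀ u v, (Slt m 4 (5*m)).Adj u v → (PB u ∧ PC v) ∨ (PC u ∧ PB v)) := by
  intro PA PB PC
  have partition : ∀ v, (PA v ∧ ¬ PB v ∧ ¬ PC v) ∨ (¬ PA v ∧ PB v ∧ ¬ PC v) ∨
      (¬ PA v ∧ ¬ PB v ∧ PC v) := by
    intro v
    obtain ⟨a, b, c, d, hv, hd, hab, hbc, hcd⟩ := v.2.eq_quad
    simp only [PA, PB, PC, hv, List.getD_cons_zero, List.getD_cons_succ]
    omega
  have edges : ∀ u v, (Slt m 4 (5*m)).Adj u v → (PB u ∧ PC v) ∨ (PC u ∧ PB v) := by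
    intro u v huv
    obtain ⟨a, b, c, d, e, hends, he, hab, hbc, hcd, hde⟩ := Slt.exists_quint_of_adj huv
    rcases hends with ⟨hu, hv⟩ | ⟨hu, hv⟩ <;>
      simp only [PB, PC, hu, hv, List.getD_cons_zero, List.getD_cons_succ] <;> omega
  refine ⟨partition, fun v hA u hvu => ?_, edges⟩
  rcases edges v u hvu with ⟨hB, -⟩ | ⟨hC, -⟩ <;> have := partition v <;> tauto

theorem stmt15 (m : ℕ) (hm : 1 ≤ m) :
    let PA : {x : List ℕ // AWordLt m 4 (5*m) x} → Prop :=
      fun v => v.1.getD 0 0 < m ∧ 4*m ≤ v.1.getD 3 0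
    let PB : {x : List ℕ // AWordLt m 4 (5*m) x} → Prop :=
      fun v => m ≤ v.1.getD 0 0 ∧ v.1.getD 0 0 < 2*m ∧ 4*m ≤ v.1.getD 3 0
    let PC : {x : List ℕ // AWordLt m 4 (5*m) x} → Prop :=
      fun v => v.1.getD 0 0 < m ∧ 3*m ≤ v.1.getD 3 0 ∧ v.1.getD 3 0 < 4*m
    (∀ v, (PA v ∧ ¬ PB v ∧ ¬ PC v) ∨ (¬ PA v ∧ PB v ∧ ¬ PC v) ∨ (¬ PA v ∧ ¬ PB v ∧ PC v)) ∧
    (∀ v, PA v → ∀ u, ¬ (Slt m 4 (5*m)).Adj v u) ∧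
    (∀ u v, (Slt m 4 (5*m)).Adj u v → (PB u ∧ PC v) ∨ (PC u ∧ PB v)) :=
  stmt15_general m
end

section
/- Let G be an undirected graph with a semi-transitive orientation, and let C = x_1x_2...x_mx_1 be a cycle in G with m ≥ 4 such that {x_1,...,x_m} does not induce a clique in G. If m-2 of the edges of C are oriented in the same direction around the cycle, then the remaining two edges of C are both oriented in the opposite direction. -/
/-!
Let `i` be an edge of the cycle outside the `m - 2` forward ones and suppose it is also forward.
All edges but one, `j`, then point forward. If `j` points forward too, the cycle is directed,
contradicting acyclicity. Otherwise the walk `x (j+1) → x (j+2) → ⋯ → x j` around the cycle is a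
directed path shortcut by the arc `x (j+1) → x j`, so semi-transitivity makes its vertices, which
are all vertices of the cycle, a clique.
-/

/-- A relation is semi-transitive if it is acyclic and for every directed path
`p 0 → p 1 → ... → p k` with an arc `p 0 → p k`, all arcs `p i → p j` (`i < j`) are present. -/
def SemiTransitive {V : Type*} (D : V → V → Prop) : Prop :=
  (∀ v, ¬ Relation.TransGen D v v) ∧
  ∀ (k : ℕ) (p : Fin (k+1) → V),
    (∀ i : Fin k, D (p i.castSucc) (p i.succ)) →
    D (p 0) (p (Fin.last k)) →
    ∀ i j : Fin (k+1), i < j → D (p i) (p j)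

/-- `D` is a semi-transitive orientation of the graph `G`. -/
def IsSemiTransOrientation {V : Type*} (G : SimpleGraph V) (D : V → V → Prop) : Prop :=
  (∀ u v, G.Adj u v ↔ (D u v ∨ D v u)) ∧ (∀ u v, D u v → ¬ D v u) ∧ SemiTransitive D

/-- The cyclic successor on `Fin m`. -/
def cyclicSucc {m : ℕ} (i : Fin m) : Fin m := ⟨(i.val + 1) % m, Nat.mod_lt _ i.pos⟩

lemma cyclicSucc_eq_add_one {n : ℕ} (i : Fin (n+1)) : cyclicSucc i = i + 1 := by
  apply Fin.ext
  simp [cyclicSucc, Fin.add_def, Nat.add_mod]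

lemma last_eq_neg_one {n : ℕ} : (Fin.last n : Fin (n+1)) = -1 := by
  ext; simp [Fin.coe_neg_one]

lemma Finset.exists_eq_or_eq_of_card_compl_eq_two {α : Type*} [Fintype α] [DecidableEq α]
    {s : Finset α} (hs : sᶜ.card = 2) {i : α} (hi : i ∉ s) :
    ∃ j, ∀ k ∉ s, k = i ∨ k = j := by
  obtain ⟨j, hj⟩ : ∃ j, sᶜ.erase i = {j} :=
    Finset.card_eq_one.mp (by rw [Finset.card_erase_of_mem (Finset.mem_compl.2 hi), hs])
  refine ⟨j, fun k hk => or_iff_not_imp_left.2 fun hki => ?_⟩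
  have hk' : k ∈ sᶜ.erase i := Finset.mem_erase.2 ⟨hki, Finset.mem_compl.2 hk⟩
  rwa [hj, Finset.mem_singleton] at hk'

section Cycle

variable {V : Type*} {D : V → V → Prop}

open Relation

lemma transGen_of_forall_castSucc_succ {k : ℕ} {p : Fin (k+2) → V}
    (h : ∀ i : Fin (k+1), D (p i.castSucc) (p i.succ)) :
    TransGen D (p 0) (p (Fin.last (k+1))) := by
  suffices ∀ i : Fin (k+1), TransGen D (p 0) (p i.succ) from this (Fin.last k)
  intro i
  induction i using Fin.induction with
  | zero => exact .single (h 0)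
  | succ i ih => exact ih.tail (Fin.succ_castSucc i ▸ h i.succ)

/-- Walking around the cycle `x` from `j + 1` up to `j` uses every edge except `j`. -/
lemma rel_rotate_castSucc_succ {n : ℕ} {x : Fin (n+1) → V} {j : Fin (n+1)}
    (hfwd : ∀ k ≠ j, D (x k) (x (k+1))) (a : Fin n) :
    D (x (j + 1 + a.castSucc)) (x (j + 1 + a.succ)) := by
  have hne : j + 1 + a.castSucc ≠ j := by
    intro h
    rw [add_assoc, add_eq_left] at h
    exact (Fin.castSucc_lt_last a).ne (by rw [eq_neg_of_add_eq_zero_right h, last_eq_neg_one])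
  have hsucc : j + 1 + a.castSucc + 1 = j + 1 + a.succ := by
    rw [← Fin.coeSucc_eq_succ]; abel
  exact hsucc ▸ hfwd _ hne

lemma not_forall_rel_add_one (hacyc : ∀ v, ¬ TransGen D v v) {n : ℕ} (x : Fin (n+2) → V) :
    ¬ ∀ k, D (x k) (x (k+1)) := by
  intro hfwd
  have hpath := transGen_of_forall_castSucc_succ (p := fun a => x (0 + 1 + a))
    (rel_rotate_castSucc_succ (j := 0) fun k _ => hfwd k)
  simp only [zero_add, add_zero, last_eq_neg_one, add_neg_cancel] at hpath
  exact hacyc _ (hpath.tail (hfwd 0))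

lemma SemiTransitive.rel_or_rel_of_one_backward (hD : SemiTransitive D) {n : ℕ}
    {x : Fin (n+1) → V} {j : Fin (n+1)} (hfwd : ∀ k ≠ j, D (x k) (x (k+1)))
    (hback : D (x (j+1)) (x j)) {a b : Fin (n+1)} (hab : a ≠ b) :
    D (x a) (x b) ∨ D (x b) (x a) := by
  have hshortcut : D (x (j + 1 + 0)) (x (j + 1 + Fin.last n)) := by
    simpa [last_eq_neg_one] using hback
  have hrel := hD.2 n (fun c => x (j + 1 + c)) (rel_rotate_castSucc_succ hfwd) hshortcut
  have hab' : a - (j + 1) ≠ b - (j + 1) := fun h => hab (sub_left_inj.mp h)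
  rcases hab'.lt_or_gt with hlt | hlt
  · left; simpa using hrel _ _ hlt
  · right; simpa using hrel _ _ hlt

end Cycle

theorem stmt19_general {V : Type*} (G : SimpleGraph V) (D : V → V → Prop)
    (hD : IsSemiTransOrientation G D)
    (m : ℕ) (hm : 4 ≤ m) (x : Fin m → V)
    (hcyc : ∀ i : Fin m, G.Adj (x i) (x (cyclicSucc i)))
    (hnotclique : ∃ i j : Fin m, i ≠ j ∧ ¬ G.Adj (x i) (x j))
    (Sf : Finset (Fin m)) (hcard : Sf.card = m - 2)
    (hfwd : ∀ i ∈ Sf, D (x i) (x (cyclicSucc i))) :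
    ∀ i ∉ Sf, D (x (cyclicSucc i)) (x i) := by
  obtain ⟨hadj, -, hsemi⟩ := hD
  obtain ⟨n, rfl⟩ : ∃ n, m = n + 2 := ⟨m - 2, by omega⟩
  simp only [cyclicSucc_eq_add_one] at hcyc hfwd ⊢
  intro i hi
  by_contra hback
  have hi_fwd : D (x i) (x (i+1)) := ((hadj _ _).1 (hcyc i)).resolve_right hback
  obtain ⟨j, hij⟩ := Finset.exists_eq_or_eq_of_card_compl_eq_two
    (by rw [Finset.card_compl, hcard, Fintype.card_fin]; omega) hi
  have hfwd' : ∀ k ≠ j, D (x k) (x (k+1)) := by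
    intro k hkj
    by_cases hk : k ∈ Sf
    · exact hfwd k hk
    · exact (hij k hk).resolve_right hkj ▸ hi_fwd
  rcases (hadj _ _).1 (hcyc j) with hj_fwd | hj_back
  · refine not_forall_rel_add_one hsemi.1 x fun k => ?_
    by_cases hkj : k = j
    · exact hkj ▸ hj_fwd
    · exact hfwd' k hkj
  · obtain ⟨a, b, hab, hnadj⟩ := hnotclique
    exact hnadj ((hadj _ _).2 (hsemi.rel_or_rel_of_one_backward hfwd' hj_back hab))

theorem stmt19 {V : Type*} (G : SimpleGraph V) (D : V → V → Prop)
    (hD : IsSemiTransOrientation G D)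
    (m : ℕ) (hm : 4 ≤ m) (x : Fin m → V) (hinj : Function.Injective x)
    (hcyc : ∀ i : Fin m, G.Adj (x i) (x (cyclicSucc i)))
    (hnotclique : ∃ i j : Fin m, i ≠ j ∧ ¬ G.Adj (x i) (x j))
    (Sf : Finset (Fin m)) (hcard : Sf.card = m - 2)
    (hfwd : ∀ i ∈ Sf, D (x i) (x (cyclicSucc i))) :
    ∀ i ∉ Sf, D (x (cyclicSucc i)) (x i) :=
  stmt19_general G D hD m hm x hcyc hnotclique Sf hcard hfwd
end
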